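/- Let μ be a Banach measure on a group G and let n ≥ 2. If a subset A ⊆ G has the property that for every m ∈ ℕ there exists a set B ⊆ G with |B| = m such that μ(⋂_{c ∈ C} cA) = 0 for every n-element subset C ⊆ B, then μ(A) = 0. Consequently, the ideal N_μ = {A ⊆ G : μ(A) = 0} is Pack_{<ω}-complete. -/

import Mathlib

open scoped Pointwise Topology

/-- A subset `A` of a group `G` is *large* if `F * A = G` for some finite `F ⊆ G`. -/
def IsLarge {G : Type*} [Group G] (A : Set G) : Prop :=
  ∃ F : Finset G, (F : Set G) * A = Set.univ

/-- A subset `A` of a group `G` is *small* if `B \ A` is large for every large `B ⊆ G`. -/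
def IsSmallSet {G : Type*} [Group G] (A : Set G) : Prop :=
  ∀ B : Set G, IsLarge B → IsLarge (B \ A)

/-- A translation-invariant ideal on a group `G`: a proper family of subsets of `G`
containing the empty set, closed under subsets, finite unions and left translations. -/
structure IsInvariantIdeal (G : Type*) [Group G] (I : Set (Set G)) : Prop where
  proper : I ≠ Set.univ
  empty_mem : ∅ ∈ I
  subset_mem : ∀ ⦃A B : Set G⦄, A ∈ I → B ⊆ A → B ∈ I
  union_mem : ∀ ⦃A B : Set G⦄, A ∈ I → B ∈ I → A ∪ B ∈ I
  translate_mem : ∀ (x : G) ⦃A : Set G⦄, A ∈ I → (fun a => x * a) '' A ∈ I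

/-- A subset `A ⊆ G` is `I`-large if `G \ FA ∈ I` for some finite `F ⊆ G`. -/
def IsILarge {G : Type*} [Group G] (I : Set (Set G)) (A : Set G) : Prop :=
  ∃ F : Finset G, (Set.univ : Set G) \ ((F : Set G) * A) ∈ I

/-- A subset `A ⊆ G` is `I`-small if `L \ A` is `I`-large for every `I`-large `L ⊆ G`. -/
def IsISmall {G : Type*} [Group G] (I : Set (Set G)) (A : Set G) : Prop :=
  ∀ L : Set G, IsILarge I L → IsILarge I (L \ A)

/-- A *Banach measure* on a group `G`: a finitely additive, left-invariant probability
"measure" defined on all subsets of `G`, with values in `[0,1]`. -/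
structure BanachMeasure (G : Type*) [Group G] where
  toFun : Set G → ℝ
  nonneg : ∀ A : Set G, 0 ≤ toFun A
  le_one : ∀ A : Set G, toFun A ≤ 1
  additive : ∀ A B : Set G, Disjoint A B → toFun (A ∪ B) = toFun A + toFun B
  measure_univ : toFun Set.univ = 1
  invariant : ∀ (x : G) (A : Set G), toFun ((fun a => x * a) '' A) = toFun A

/-- The Følner condition: for every finite `F ⊆ G` and `ε > 0` there is a nonempty finite
`E ⊆ G` with `|E △ xE| < ε·|E|` for all `x ∈ F`.  A group is *amenable* iff it satisfies it. -/
def FolnerCond (G : Type*) [Group G] : Prop :=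
  ∀ (F : Finset G) (ε : ℝ), 0 < ε → ∃ E : Finset G, E.Nonempty ∧
    ∀ x ∈ F, ((symmDiff (E : Set G) ((fun a => x * a) '' (E : Set G))).ncard : ℝ) < ε * E.card

/-- An ideal `I` on `G` is `Pack_n`-complete if it contains every set `A` with
`I`-`Pack_n(A) ≥ ℵ₀`, i.e. every `A` such that for each `m` there is a set `B` of
cardinality `m` with `⋂_{c ∈ C} cA ∈ I` for each `n`-element `C ⊆ B`. -/
def PackNComplete {G : Type*} [Group G] (I : Set (Set G)) (n : ℕ) : Prop :=
  ∀ A : Set G,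
    (∀ m : ℕ, ∃ B : Finset G, B.card = m ∧
      ∀ C : Finset G, C ⊆ B → C.card = n → (⋂ c ∈ C, (fun a => c * a) '' A) ∈ I) →
    A ∈ I

/-!
Fix `B` with `|B| = m` and sort the points of `G` by the set `T ⊆ B` of those `c` with
`x ∈ cA`. Summing the measures of the translates `cA`, `c ∈ B`, counts the measure of the
fibre over `T` exactly `|T|` times; fibres with `|T| ≥ n` lie in an `n`-fold intersection and
are null, and all fibres together have measure `1`. Hence `m μ(A) = ∑_{c ∈ B} μ(cA) ≤ n - 1`
for every `m`, which forces `μ(A) = 0`.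
-/

namespace BanachMeasure

variable {G : Type*} [Group G] (μ : BanachMeasure G)

theorem toFun_empty : μ.toFun ∅ = 0 := by
  have h := μ.additive ∅ ∅ (Set.disjoint_empty _)
  rw [Set.union_empty] at h
  linarith

theorem toFun_mono {A B : Set G} (h : A ⊆ B) : μ.toFun A ≤ μ.toFun B := by
  have h_add := μ.additive A (B \ A) disjoint_sdiff_self_right
  rw [Set.union_sdiff_cancel h] at h_add
  linarith [μ.nonneg (B \ A)]

theorem toFun_biUnion_finset {ι : Type*} (s : Finset ι) (f : ι → Set G)
    (h : (s : Set ι).PairwiseDisjoint f) :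
    μ.toFun (⋃ i ∈ s, f i) = ∑ i ∈ s, μ.toFun (f i) := by
  classical
  induction s using Finset.induction_on with
  | empty => simpa using μ.toFun_empty
  | insert a s ha ih =>
    rw [Finset.coe_insert] at h
    have hdisj : Disjoint (f a) (⋃ i ∈ s, f i) :=
      Set.disjoint_iUnion₂_right.2 fun i hi =>
        h (Set.mem_insert a _) (Set.mem_insert_of_mem a hi) (ne_of_mem_of_not_mem hi ha).symm
    rw [Finset.sum_insert ha, ← ih (h.subset (Set.subset_insert a _)), ← μ.additive _ _ hdisj,
      Finset.set_biUnion_insert]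

theorem toFun_preimage_eq_sum_fiber {β : Type*} (φ : G → β) (s : Finset β)
    (hφ : ∀ x, φ x ∈ s) (t : Set β) [DecidablePred (· ∈ t)] :
    μ.toFun (φ ⁻¹' t) = ∑ b ∈ s with b ∈ t, μ.toFun (φ ⁻¹' {b}) := by
  rw [← μ.toFun_biUnion_finset _ _ fun b _ b' _ hne =>
    Set.disjoint_singleton.2 hne |>.preimage φ]
  congr 1
  ext x
  simp [hφ x]

theorem sum_toFun_fiber_eq_one {β : Type*} (φ : G → β) (s : Finset β) (hφ : ∀ x, φ x ∈ s) :
    ∑ b ∈ s, μ.toFun (φ ⁻¹' {b}) = 1 := by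
  classical
  simpa [μ.measure_univ] using (μ.toFun_preimage_eq_sum_fiber φ s hφ Set.univ).symm

theorem sum_toFun_le_of_toFun_biInter_eq_zero {ι : Type*} (E : ι → Set G) (B : Finset ι)
    (n : ℕ) (hE : ∀ C ⊆ B, C.card = n → μ.toFun (⋂ c ∈ C, E c) = 0) :
    ∑ c ∈ B, μ.toFun (E c) ≤ n - 1 := by
  classical
  set φ : G → Finset ι := fun x => {c ∈ B | x ∈ E c}
  have hφ : ∀ x, φ x ∈ B.powerset := fun x => Finset.mem_powerset.2 (Finset.filter_subset _ _)
  set w : Finset ι → ℝ := fun T => μ.toFun (φ ⁻¹' {T})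
  have h_translate : ∀ c ∈ B, μ.toFun (E c) = ∑ T ∈ B.powerset with c ∈ T, w T := by
    intro c hc
    rw [show E c = φ ⁻¹' {T | c ∈ T} by ext x; simp [φ, hc]]
    exact μ.toFun_preimage_eq_sum_fiber φ _ hφ {T | c ∈ T}
  have h_double_count : ∑ c ∈ B, μ.toFun (E c) = ∑ T ∈ B.powerset, (T.card : ℝ) * w T := by
    rw [Finset.sum_congr rfl h_translate, Finset.sum_comm' (t' := B.powerset)
      (s' := fun T => T) (fun c T => by
        simp only [Finset.mem_filter, Finset.mem_powerset]
        exact ⟨fun h => ⟨h.2.2, h.2.1⟩, fun h => ⟨h.2 h.1, h.2, h.1⟩⟩)]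
    refine Finset.sum_congr rfl fun T _ => ?_
    rw [Finset.sum_const, nsmul_eq_mul]
  have h_fiber : ∀ T ∈ B.powerset, (T.card : ℝ) * w T ≤ (n - 1) * w T := by
    intro T hT
    by_cases hTn : n ≤ T.card
    · obtain ⟨C, hCT, hCn⟩ := Finset.exists_subset_card_eq hTn
      have h_sub : φ ⁻¹' {T} ⊆ ⋂ c ∈ C, E c := by
        intro x hx
        simp only [Set.mem_preimage, Set.mem_singleton_iff] at hx
        refine Set.mem_iInter₂.2 fun c hc => ?_
        have hc' : c ∈ φ x := hx ▸ hCT hc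
        exact (Finset.mem_filter.1 hc').2
      have hw : w T = 0 := le_antisymm
        ((μ.toFun_mono h_sub).trans_eq (hE C (hCT.trans (Finset.mem_powerset.1 hT)) hCn))
        (μ.nonneg _)
      simp [hw]
    · have : (T.card : ℝ) + 1 ≤ n := by exact_mod_cast not_le.1 hTn
      exact mul_le_mul_of_nonneg_right (by linarith) (μ.nonneg _)
  calc ∑ c ∈ B, μ.toFun (E c) = ∑ T ∈ B.powerset, (T.card : ℝ) * w T := h_double_count
    _ ≤ ∑ T ∈ B.powerset, (n - 1) * w T := Finset.sum_le_sum h_fiber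
    _ = n - 1 := by rw [← Finset.mul_sum, μ.sum_toFun_fiber_eq_one φ _ hφ, mul_one]

theorem card_mul_toFun_le (n : ℕ) (A : Set G) (B : Finset G)
    (hB : ∀ C ⊆ B, C.card = n → μ.toFun (⋂ c ∈ C, (fun a => c * a) '' A) = 0) :
    B.card * μ.toFun A ≤ n - 1 := by
  have h := μ.sum_toFun_le_of_toFun_biInter_eq_zero _ B n hB
  simpa only [μ.invariant, Finset.sum_const, nsmul_eq_mul] using h

theorem toFun_eq_zero_of_forall_card (n : ℕ) (A : Set G)
    (H : ∀ m : ℕ, ∃ B : Finset G, B.card = m ∧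
      ∀ C ⊆ B, C.card = n → μ.toFun (⋂ c ∈ C, (fun a => c * a) '' A) = 0) :
    μ.toFun A = 0 := by
  refine le_antisymm (le_of_forall_pos_le_add fun ε hε => ?_) (μ.nonneg A)
  obtain ⟨m, hm⟩ := exists_nat_gt ((n - 1) / ε)
  obtain ⟨B, rfl, hB⟩ := H m
  have h := μ.card_mul_toFun_le n A B hB
  rw [div_lt_iff₀ hε] at hm
  nlinarith [μ.nonneg A]

end BanachMeasure

theorem banachMeasure_null_ideal_pack_complete_general {G : Type*} [Group G]
    (μ : BanachMeasure G) (n : ℕ) :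
    (∀ A : Set G,
      (∀ m : ℕ, ∃ B : Finset G, B.card = m ∧
        ∀ C : Finset G, C ⊆ B → C.card = n →
          μ.toFun (⋂ c ∈ C, (fun a => c * a) '' A) = 0) →
      μ.toFun A = 0) ∧
    (∀ k : ℕ, 2 ≤ k → PackNComplete {A : Set G | μ.toFun A = 0} k) :=
  ⟨fun A => μ.toFun_eq_zero_of_forall_card n A, fun k _ A => μ.toFun_eq_zero_of_forall_card k A⟩

/-- For a Banach measure `μ` on a group `G` and `n ≥ 2`: if for every `m` there is a set `B`
of cardinality `m` such that `μ(⋂_{c ∈ C} cA) = 0` for every `n`-element `C ⊆ B`, then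
`μ(A) = 0`.  Consequently the ideal `N_μ` is `Pack_{<ω}`-complete. -/
theorem banachMeasure_null_ideal_pack_complete {G : Type*} [Group G]
    (μ : BanachMeasure G) (n : ℕ) (hn : 2 ≤ n) :
    (∀ A : Set G,
      (∀ m : ℕ, ∃ B : Finset G, B.card = m ∧
        ∀ C : Finset G, C ⊆ B → C.card = n →
          μ.toFun (⋂ c ∈ C, (fun a => c * a) '' A) = 0) →
      μ.toFun A = 0) ∧
    (∀ k : ℕ, 2 ≤ k → PackNComplete {A : Set G | μ.toFun A = 0} k) :=
  banachMeasure_null_ideal_pack_complete_general μ n
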